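/- Let X and Y be complex Banach spaces, let 0 ≤ μ < 1, let C_F : (0,∞) → (0,∞) be non-increasing, and let F : ℂ ∖ (−∞,0] → B(X,Y) be continuous with ‖F(s)‖ ≤ C_F(Re s^{1/2}) · |s|^μ for all s ∈ ℂ ∖ (−∞,0], where s^{1/2} is the principal square root. Let g : ℝ → X be continuously differentiable with g(τ) = 0 for all τ ≤ 0, and set a(s,t) := ∫_0^t e^{s(t−τ)} g'(τ) dτ. Fix c > 0, φ ∈ (0, π/2), t ≥ 0, and define I(t) := (1/2πi) [ − ∫_c^∞ ρ^{−1} F(ρ e^{−i(π−φ)}) a(ρ e^{−i(π−φ)}, t) dρ + i ∫_{−(π−φ)}^{π−φ} F(c e^{iθ}) a(c e^{iθ}, t) dθ + ∫_c^∞ ρ^{−1} F(ρ e^{i(π−φ)}) a(ρ e^{i(π−φ)}, t) dρ ] (all Bochner integrals, which exist). Then ‖I(t)‖ ≤ (1/π) · [ (π−φ) · c^μ · e^{c·t} · t + c^{μ−1} / ((1−μ)·cos φ) ] · C_F(√c · sin(φ/2)) · max_{0≤τ≤t} ‖g'(τ)‖. -/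

import Mathlib

/-!
On the rays `s = ρ e^{±i(π-φ)}`, `ρ ≥ c`, one has `Re s = -ρ cos φ`, so `‖a(s,t)‖ ≤ M / (ρ cos φ)`
with `M = max_{[0,t]} ‖g'‖`, while `Re s^{1/2} = √ρ sin(φ/2) ≥ √c sin(φ/2)` and the monotonicity of
`C_F` give `‖F s‖ ≤ C_F(√c sin(φ/2)) ρ^μ`. The ray integrands are therefore `O(ρ^{μ-2})`, which is
integrable on `[c, ∞)` exactly because `μ < 1`. On the arc `Re s ≤ c`, so `‖a(s,t)‖ ≤ e^{ct} M t`,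
and the arc has angular length `2(π-φ)`.
-/

open MeasureTheory Real

/-- The principal square root `s^{1/2} = |s|^{1/2} e^{i Arg(s)/2}`. -/
noncomputable def csqrt (s : ℂ) : ℂ :=
  (Real.sqrt (‖s‖) : ℂ) * Complex.exp (Complex.I * (s.arg / 2))

/-- `a(s,t) = ∫_0^t e^{s(t-τ)} g'(τ) dτ`. -/
noncomputable def aInt {X : Type*} [NormedAddCommGroup X] [NormedSpace ℂ X]
    (g : ℝ → X) (s : ℂ) (t : ℝ) : X :=
  ∫ τ in (0:ℝ)..t, Complex.exp (s * (t - τ)) • deriv g τ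

lemma setOf_ne_ofReal_nonpos_eq_slitPlane :
    {s : ℂ | ∀ x : ℝ, x ≤ 0 → s ≠ x} = Complex.slitPlane := by
  ext s
  simp only [Set.mem_ofPred_eq, Complex.mem_slitPlane_iff_not_le_zero, Complex.le_def]
  constructor
  · rintro h ⟨hre, him⟩
    exact h s.re (by simpa using hre) (Complex.ext rfl (by simpa using him))
  · rintro h x hx rfl
    exact h ⟨by simpa using hx, by simp⟩

section Polar

variable {ρ θ : ℝ}

lemma norm_ofReal_mul_exp_I (hρ : 0 ≤ ρ) : ‖(ρ : ℂ) * Complex.exp (Complex.I * θ)‖ = ρ := by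
  rw [norm_mul, mul_comm Complex.I, Complex.norm_exp_ofReal_mul_I, mul_one, Complex.norm_real,
    norm_of_nonneg hρ]

lemma re_ofReal_mul_exp_I : ((ρ : ℂ) * Complex.exp (Complex.I * θ)).re = ρ * Real.cos θ := by
  rw [mul_comm Complex.I, Complex.re_ofReal_mul, Complex.exp_ofReal_mul_I_re]

lemma arg_ofReal_mul_exp_I (hρ : 0 < ρ) (hθ : θ ∈ Set.Ioc (-π) π) :
    ((ρ : ℂ) * Complex.exp (Complex.I * θ)).arg = θ := by
  rw [mul_comm Complex.I, Complex.exp_mul_I,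
    Complex.arg_mul_cos_add_sin_mul_I hρ hθ]

lemma ofReal_mul_exp_I_mem_slitPlane (hρ : 0 < ρ) (hθ : θ ∈ Set.Ioo (-π) π) :
    (ρ : ℂ) * Complex.exp (Complex.I * θ) ∈ Complex.slitPlane := by
  rw [Complex.mem_slitPlane_iff_arg, arg_ofReal_mul_exp_I hρ ⟨hθ.1, hθ.2.le⟩]
  exact ⟨hθ.2.ne, mul_ne_zero (by exact_mod_cast hρ.ne') (Complex.exp_ne_zero _)⟩

lemma csqrt_ofReal_mul_exp_I_re (hρ : 0 < ρ) (hθ : θ ∈ Set.Ioc (-π) π) :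
    (csqrt ((ρ : ℂ) * Complex.exp (Complex.I * θ))).re = √ρ * Real.cos (θ / 2) := by
  rw [csqrt, norm_ofReal_mul_exp_I hρ.le, arg_ofReal_mul_exp_I hρ hθ,
    show Complex.I * ((θ : ℂ) / 2) = Complex.I * ((θ / 2 : ℝ) : ℂ) by push_cast; ring,
    re_ofReal_mul_exp_I]

end Polar

lemma sin_half_le_cos_half {θ φ : ℝ} (hφ : -π ≤ φ) (hθ : |θ| ≤ π - φ) :
    Real.sin (φ / 2) ≤ Real.cos (θ / 2) := by
  rw [← Real.cos_abs (θ / 2), ← Real.cos_pi_div_two_sub]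
  apply Real.cos_le_cos_of_nonneg_of_le_pi (abs_nonneg _) (by linarith)
  rw [abs_div, abs_two]
  linarith

lemma integral_exp_neg_mul_sub {b : ℝ} (hb : b ≠ 0) (t : ℝ) :
    ∫ τ in (0 : ℝ)..t, Real.exp (-b * (t - τ)) = (1 - Real.exp (-b * t)) / b := by
  have hderiv : ∀ τ ∈ Set.uIcc (0 : ℝ) t,
      HasDerivAt (fun τ => Real.exp (-b * (t - τ)) / b) (Real.exp (-b * (t - τ))) τ := by
    intro τ _
    have hlin : HasDerivAt (fun τ : ℝ => -b * (t - τ)) b τ := by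
      simpa using ((hasDerivAt_id τ).const_sub t).const_mul (-b)
    simpa [mul_div_cancel_right₀ _ hb] using hlin.exp.div_const b
  rw [intervalIntegral.integral_eq_sub_of_hasDerivAt hderiv
    ((by fun_prop : Continuous fun τ : ℝ => Real.exp (-b * (t - τ))).intervalIntegrable _ _)]
  simp only [sub_self, mul_zero, Real.exp_zero, sub_zero]
  ring

section Laplace

variable {X : Type*} [NormedAddCommGroup X] [NormedSpace ℂ X] {g : ℝ → X} {s : ℂ} {t M : ℝ}

lemma continuous_aInt (hg : Continuous (deriv g)) (t : ℝ) : Continuous fun s : ℂ => aInt g s t :=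
  intervalIntegral.continuous_parametric_intervalIntegral_of_continuous'
    ((Complex.continuous_exp.comp (by fun_prop)).smul (hg.comp continuous_snd)) _ _

lemma norm_exp_smul_deriv_le (hM : ∀ τ ∈ Set.Icc 0 t, ‖deriv g τ‖ ≤ M) {τ : ℝ}
    (hτ : τ ∈ Set.uIoc 0 t) (ht : 0 ≤ t) :
    ‖Complex.exp (s * (t - τ)) • deriv g τ‖ ≤ Real.exp (s.re * (t - τ)) * M := by
  rw [Set.uIoc_of_le ht] at hτ
  rw [norm_smul, Complex.norm_exp, show (s * (t - τ)).re = s.re * (t - τ) by simp]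
  exact mul_le_mul_of_nonneg_left (hM τ ⟨hτ.1.le, hτ.2⟩) (Real.exp_pos _).le

lemma norm_aInt_le_of_re_le {c : ℝ} (ht : 0 ≤ t) (hc : 0 ≤ c) (hs : s.re ≤ c)
    (hM : ∀ τ ∈ Set.Icc 0 t, ‖deriv g τ‖ ≤ M) :
    ‖aInt g s t‖ ≤ Real.exp (c * t) * M * t := by
  have hM0 : 0 ≤ M := (norm_nonneg _).trans (hM 0 ⟨le_rfl, ht⟩)
  have h := intervalIntegral.norm_integral_le_of_norm_le_const (C := Real.exp (c * t) * M)
    fun τ hτ => (norm_exp_smul_deriv_le (s := s) hM hτ ht).trans <| by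
      rw [Set.uIoc_of_le ht] at hτ
      gcongr
      · linarith [hτ.2]
      · linarith [hτ.1]
  rwa [sub_zero, abs_of_nonneg ht] at h

lemma norm_aInt_le_of_re_eq_neg {b : ℝ} (ht : 0 ≤ t) (hb : 0 < b) (hs : s.re = -b)
    (hM : ∀ τ ∈ Set.Icc 0 t, ‖deriv g τ‖ ≤ M) :
    ‖aInt g s t‖ ≤ M / b := by
  have hM0 : 0 ≤ M := (norm_nonneg _).trans (hM 0 ⟨le_rfl, ht⟩)
  have hbound : ∀ᵐ τ : ℝ ∂volume.restrict (Set.uIoc 0 t),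
      ‖Complex.exp (s * (t - τ)) • deriv g τ‖ ≤ M * Real.exp (-b * (t - τ)) := by
    rw [ae_restrict_iff' measurableSet_uIoc]
    filter_upwards with τ hτ
    rw [mul_comm M, ← hs]
    exact norm_exp_smul_deriv_le hM hτ ht
  calc ‖aInt g s t‖ ≤ |∫ τ in (0 : ℝ)..t, M * Real.exp (-b * (t - τ))| :=
        intervalIntegral.norm_integral_le_abs_of_norm_le hbound
          ((by fun_prop : Continuous fun τ : ℝ => M * Real.exp (-b * (t - τ))).intervalIntegrable
            _ _)
    _ = M * ((1 - Real.exp (-b * t)) / b) := by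
        rw [intervalIntegral.integral_const_mul, integral_exp_neg_mul_sub hb.ne', abs_of_nonneg]
        exact mul_nonneg hM0
          (div_nonneg (sub_nonneg.2 (Real.exp_le_one_iff.2 (by nlinarith))) hb.le)
    _ ≤ M / b := by
        rw [mul_div_assoc']
        exact div_le_div_of_nonneg_right
          (mul_le_of_le_one_right hM0 (by linarith [Real.exp_pos (-b * t)])) hb.le

end Laplace

lemma integrableOn_Ici_and_norm_integral_le_of_norm_le_rpow {E : Type*} [NormedAddCommGroup E]
    [NormedSpace ℝ E] {f : ℝ → E} {a c K : ℝ} (ha : a < -1) (hc : 0 < c)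
    (hf : AEStronglyMeasurable f (volume.restrict (Set.Ici c)))
    (hbound : ∀ ρ ∈ Set.Ici c, ‖f ρ‖ ≤ K * ρ ^ a) :
    IntegrableOn f (Set.Ici c) ∧ ‖∫ ρ in Set.Ici c, f ρ‖ ≤ K * (-c ^ (a + 1) / (a + 1)) := by
  have hmajorant : IntegrableOn (fun ρ : ℝ => K * ρ ^ a) (Set.Ici c) :=
    (integrableOn_Ici_iff_integrableOn_Ioi).2 ((integrableOn_Ioi_rpow_of_lt ha hc).const_mul K)
  have hbound' : ∀ᵐ ρ ∂volume.restrict (Set.Ici c), ‖f ρ‖ ≤ K * ρ ^ a :=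
    (ae_restrict_iff' measurableSet_Ici).2 (.of_forall hbound)
  refine ⟨hmajorant.mono' hf hbound', ?_⟩
  calc ‖∫ ρ in Set.Ici c, f ρ‖ ≤ ∫ ρ in Set.Ici c, K * ρ ^ a :=
        norm_integral_le_of_norm_le hmajorant hbound'
    _ = K * (-c ^ (a + 1) / (a + 1)) := by
        rw [integral_Ici_eq_integral_Ioi, integral_const_mul, integral_Ioi_rpow_of_lt ha hc]

section Contour

variable {X Y : Type*} [NormedAddCommGroup X] [NormedSpace ℂ X] [NormedAddCommGroup Y]
  [NormedSpace ℂ Y] {μ : ℝ} {CF : ℝ → ℝ} {F : ℂ → X →L[ℂ] Y} {g : ℝ → X} {c φ t M : ℝ}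

lemma norm_F_ofReal_mul_exp_I_le (hCFanti : ∀ x y : ℝ, 0 < x → x ≤ y → CF y ≤ CF x)
    (hFbound : ∀ s : ℂ, (∀ x : ℝ, x ≤ 0 → s ≠ (x : ℂ)) → ‖F s‖ ≤ CF (csqrt s).re * ‖s‖ ^ μ)
    {ρ θ : ℝ} (hc : 0 < c) (hcρ : c ≤ ρ) (hφ : 0 < φ) (hθ : |θ| ≤ π - φ) :
    ‖F ((ρ : ℂ) * Complex.exp (Complex.I * θ))‖ ≤ CF (√c * Real.sin (φ / 2)) * ρ ^ μ := by
  have hρ : 0 < ρ := hc.trans_le hcρ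
  obtain ⟨hθl, hθr⟩ := abs_le.1 hθ
  have hslit := ofReal_mul_exp_I_mem_slitPlane hρ (θ := θ) ⟨by linarith, by linarith⟩
  rw [← setOf_ne_ofReal_nonpos_eq_slitPlane] at hslit
  have hF := hFbound _ hslit
  rw [csqrt_ofReal_mul_exp_I_re hρ ⟨by linarith, by linarith⟩, norm_ofReal_mul_exp_I hρ.le] at hF
  refine hF.trans (mul_le_mul_of_nonneg_right (hCFanti _ _ ?_ ?_) (by positivity))
  · exact mul_pos (Real.sqrt_pos.2 hc) (Real.sin_pos_of_pos_of_lt_pi (by linarith)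
      (by linarith [abs_nonneg θ]))
  · exact mul_le_mul (Real.sqrt_le_sqrt hcρ) (sin_half_le_cos_half (by linarith) hθ)
      (Real.sin_nonneg_of_nonneg_of_le_pi (by linarith) (by linarith [abs_nonneg θ]))
      (Real.sqrt_nonneg _)

lemma norm_ray_integrand_le (hCFanti : ∀ x y : ℝ, 0 < x → x ≤ y → CF y ≤ CF x)
    (hFbound : ∀ s : ℂ, (∀ x : ℝ, x ≤ 0 → s ≠ (x : ℂ)) → ‖F s‖ ≤ CF (csqrt s).re * ‖s‖ ^ μ)
    (hc : 0 < c) (hφ : φ ∈ Set.Ioo 0 (π / 2)) (ht : 0 ≤ t)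
    (hM : ∀ τ ∈ Set.Icc 0 t, ‖deriv g τ‖ ≤ M) {θ : ℝ} (hθ : |θ| = π - φ) {ρ : ℝ} (hρ : c ≤ ρ) :
    ‖((ρ : ℂ))⁻¹ • F ((ρ : ℂ) * Complex.exp (Complex.I * θ))
        (aInt g ((ρ : ℂ) * Complex.exp (Complex.I * θ)) t)‖
      ≤ CF (√c * Real.sin (φ / 2)) * M / Real.cos φ * ρ ^ (μ - 2) := by
  obtain ⟨hφ0, hφ2⟩ := hφ
  have hρ0 : 0 < ρ := hc.trans_le hρ
  have hcosφ : 0 < Real.cos φ := Real.cos_pos_of_mem_Ioo ⟨by linarith, hφ2⟩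
  set s := (ρ : ℂ) * Complex.exp (Complex.I * θ)
  have hF : ‖F s‖ ≤ CF (√c * Real.sin (φ / 2)) * ρ ^ μ :=
    norm_F_ofReal_mul_exp_I_le hCFanti hFbound hc hρ hφ0 hθ.le
  have hre : s.re = -(ρ * Real.cos φ) := by
    rw [re_ofReal_mul_exp_I, ← Real.cos_abs, hθ, Real.cos_pi_sub, mul_neg]
  have ha : ‖aInt g s t‖ ≤ M / (ρ * Real.cos φ) :=
    norm_aInt_le_of_re_eq_neg ht (by positivity) hre hM
  have hrpow : ρ ^ (μ - 2) = ρ ^ μ * ρ⁻¹ * ρ⁻¹ := by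
    rw [sub_eq_add_neg, Real.rpow_add hρ0, show (-2 : ℝ) = -1 + -1 by norm_num,
      Real.rpow_add hρ0, Real.rpow_neg_one, mul_assoc]
  calc ‖((ρ : ℂ))⁻¹ • F s (aInt g s t)‖ ≤ ρ⁻¹ * (‖F s‖ * ‖aInt g s t‖) := by
        rw [norm_smul, norm_inv, Complex.norm_real, norm_of_nonneg hρ0.le]
        exact mul_le_mul_of_nonneg_left ((F s).le_opNorm _) (by positivity)
    _ ≤ ρ⁻¹ * (CF (√c * Real.sin (φ / 2)) * ρ ^ μ * (M / (ρ * Real.cos φ))) := by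
        gcongr
        exact (norm_nonneg _).trans hF
    _ = CF (√c * Real.sin (φ / 2)) * M / Real.cos φ * ρ ^ (μ - 2) := by
        rw [hrpow]
        field_simp

lemma integrableOn_Ici_and_norm_integral_ray_le (hμ1 : μ < 1)
    (hCFanti : ∀ x y : ℝ, 0 < x → x ≤ y → CF y ≤ CF x)
    (hFcont : ContinuousOn F {s : ℂ | ∀ x : ℝ, x ≤ 0 → s ≠ (x : ℂ)})
    (hFbound : ∀ s : ℂ, (∀ x : ℝ, x ≤ 0 → s ≠ (x : ℂ)) → ‖F s‖ ≤ CF (csqrt s).re * ‖s‖ ^ μ)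
    (hg : Continuous (deriv g)) (hc : 0 < c) (hφ : φ ∈ Set.Ioo 0 (π / 2)) (ht : 0 ≤ t)
    (hM : ∀ τ ∈ Set.Icc 0 t, ‖deriv g τ‖ ≤ M) {θ : ℝ} (hθ : |θ| = π - φ) :
    IntegrableOn (fun ρ : ℝ => ((ρ : ℂ))⁻¹ • F ((ρ : ℂ) * Complex.exp (Complex.I * θ))
        (aInt g ((ρ : ℂ) * Complex.exp (Complex.I * θ)) t)) (Set.Ici c) ∧
      ‖∫ ρ in Set.Ici c, ((ρ : ℂ))⁻¹ • F ((ρ : ℂ) * Complex.exp (Complex.I * θ))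
        (aInt g ((ρ : ℂ) * Complex.exp (Complex.I * θ)) t)‖
        ≤ CF (√c * Real.sin (φ / 2)) * M / Real.cos φ * (c ^ (μ - 1) / (1 - μ)) := by
  have hθπ : θ ∈ Set.Ioo (-π) π := by
    constructor <;> linarith [neg_abs_le θ, le_abs_self θ, hφ.1]
  have hslit : ∀ ρ ∈ Set.Ici c, (ρ : ℂ) * Complex.exp (Complex.I * θ) ∈
      {s : ℂ | ∀ x : ℝ, x ≤ 0 → s ≠ (x : ℂ)} := fun ρ hρ => by
    rw [setOf_ne_ofReal_nonpos_eq_slitPlane]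
    exact ofReal_mul_exp_I_mem_slitPlane (hc.trans_le hρ) hθπ
  have hcont : ContinuousOn (fun ρ : ℝ => ((ρ : ℂ))⁻¹ • F ((ρ : ℂ) * Complex.exp (Complex.I * θ))
      (aInt g ((ρ : ℂ) * Complex.exp (Complex.I * θ)) t)) (Set.Ici c) :=
    (Complex.continuous_ofReal.continuousOn.inv₀ fun ρ hρ => by
      exact_mod_cast (hc.trans_le hρ).ne').smul
      ((hFcont.comp (by fun_prop) hslit).clm_apply
        ((continuous_aInt hg t).comp (by fun_prop)).continuousOn)
  have h := integrableOn_Ici_and_norm_integral_le_of_norm_le_rpow (by linarith) hc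
    (hcont.aestronglyMeasurable measurableSet_Ici)
    fun ρ hρ => norm_ray_integrand_le hCFanti hFbound hc hφ ht hM hθ hρ
  rwa [show μ - 2 + 1 = μ - 1 by ring, show -c ^ (μ - 1) / (μ - 1) = c ^ (μ - 1) / (1 - μ) by
    rw [← neg_sub, div_neg, neg_div, neg_neg]] at h

lemma norm_integral_arc_le (hCFanti : ∀ x y : ℝ, 0 < x → x ≤ y → CF y ≤ CF x)
    (hFbound : ∀ s : ℂ, (∀ x : ℝ, x ≤ 0 → s ≠ (x : ℂ)) → ‖F s‖ ≤ CF (csqrt s).re * ‖s‖ ^ μ)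
    (hc : 0 < c) (hφ0 : 0 < φ) (hφπ : φ ≤ π) (ht : 0 ≤ t)
    (hM : ∀ τ ∈ Set.Icc 0 t, ‖deriv g τ‖ ≤ M) :
    ‖∫ θ in (-(π - φ))..(π - φ), F ((c : ℂ) * Complex.exp (Complex.I * θ))
        (aInt g ((c : ℂ) * Complex.exp (Complex.I * θ)) t)‖
      ≤ CF (√c * Real.sin (φ / 2)) * c ^ μ * (Real.exp (c * t) * M * t) * (2 * (π - φ)) := by
  have h := intervalIntegral.norm_integral_le_of_norm_le_const (a := -(π - φ)) (b := π - φ)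
    (C := CF (√c * Real.sin (φ / 2)) * c ^ μ * (Real.exp (c * t) * M * t))
    (f := fun θ : ℝ => F ((c : ℂ) * Complex.exp (Complex.I * θ))
      (aInt g ((c : ℂ) * Complex.exp (Complex.I * θ)) t)) fun θ hθ => by
    rw [Set.uIoc_of_le (by linarith)] at hθ
    have hθ' : |θ| ≤ π - φ := abs_le.2 ⟨hθ.1.le, hθ.2⟩
    have hF := norm_F_ofReal_mul_exp_I_le (μ := μ) (F := F) hCFanti hFbound hc le_rfl hφ0 hθ'
    have ha := norm_aInt_le_of_re_le (s := (c : ℂ) * Complex.exp (Complex.I * θ)) ht hc.le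
      (by rw [re_ofReal_mul_exp_I]; nlinarith [Real.cos_le_one θ]) hM
    exact ((F _).le_opNorm _).trans
      (mul_le_mul hF ha (norm_nonneg _) ((norm_nonneg _).trans hF))
  rwa [show π - φ - -(π - φ) = 2 * (π - φ) by ring, abs_of_nonneg (by linarith)] at h

end Contour

lemma norm_inv_two_pi_I_smul_le {Y : Type*} [NormedAddCommGroup Y] [NormedSpace ℂ Y]
    (A B C : Y) :
    ‖(2 * (π : ℂ) * Complex.I)⁻¹ • (-A + Complex.I • B + C)‖ ≤ (2 * π)⁻¹ * (‖A‖ + ‖B‖ + ‖C‖) := by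
  rw [norm_smul, norm_inv, norm_mul, norm_mul, Complex.norm_I, Complex.norm_real,
    norm_of_nonneg pi_pos.le, Complex.norm_ofNat, mul_one]
  gcongr
  refine (norm_add₃_le).trans_eq ?_
  rw [norm_neg, norm_smul, Complex.norm_I, one_mul]

theorem stmt11_general {X Y : Type*} [NormedAddCommGroup X] [NormedSpace ℂ X]
    [NormedAddCommGroup Y] [NormedSpace ℂ Y]
    (μ : ℝ) (hμ1 : μ < 1)
    (CF : ℝ → ℝ)
    (hCFanti : ∀ x y : ℝ, 0 < x → x ≤ y → CF y ≤ CF x)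
    (F : ℂ → X →L[ℂ] Y)
    (hFcont : ContinuousOn F {s : ℂ | ∀ x : ℝ, x ≤ 0 → s ≠ (x : ℂ)})
    (hFbound : ∀ s : ℂ, (∀ x : ℝ, x ≤ 0 → s ≠ (x : ℂ)) →
      ‖F s‖ ≤ CF (csqrt s).re * ‖s‖ ^ μ)
    (g : ℝ → X) (hg : ContDiff ℝ 1 g)
    (c φ t : ℝ) (hc : 0 < c) (hφ : φ ∈ Set.Ioo 0 (π / 2)) (ht : 0 ≤ t) :
    IntegrableOn (fun ρ : ℝ =>
        ((ρ : ℂ))⁻¹ • F ((ρ : ℂ) * Complex.exp (-Complex.I * ((π : ℝ) - φ)))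
          (aInt g ((ρ : ℂ) * Complex.exp (-Complex.I * ((π : ℝ) - φ))) t))
      (Set.Ici c)
    ∧ IntegrableOn (fun ρ : ℝ =>
        ((ρ : ℂ))⁻¹ • F ((ρ : ℂ) * Complex.exp (Complex.I * ((π : ℝ) - φ)))
          (aInt g ((ρ : ℂ) * Complex.exp (Complex.I * ((π : ℝ) - φ))) t))
      (Set.Ici c)
    ∧ ‖(2 * (π : ℂ) * Complex.I)⁻¹ •
          (-(∫ ρ in Set.Ici c,
              ((ρ : ℂ))⁻¹ • F ((ρ : ℂ) * Complex.exp (-Complex.I * ((π : ℝ) - φ)))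
                (aInt g ((ρ : ℂ) * Complex.exp (-Complex.I * ((π : ℝ) - φ))) t))
            + Complex.I • (∫ θ in (-(π - φ))..(π - φ),
                F ((c : ℂ) * Complex.exp (Complex.I * θ))
                  (aInt g ((c : ℂ) * Complex.exp (Complex.I * θ)) t))
            + ∫ ρ in Set.Ici c,
                ((ρ : ℂ))⁻¹ • F ((ρ : ℂ) * Complex.exp (Complex.I * ((π : ℝ) - φ)))
                  (aInt g ((ρ : ℂ) * Complex.exp (Complex.I * ((π : ℝ) - φ))) t))‖
        ≤ (1 / π) * ((π - φ) * c ^ μ * Real.exp (c * t) * t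
              + c ^ (μ - 1) / ((1 - μ) * Real.cos φ))
            * CF (Real.sqrt c * Real.sin (φ / 2))
            * sSup ((fun τ => ‖deriv g τ‖) '' Set.Icc 0 t) := by
  have hdg : Continuous (deriv g) := hg.continuous_deriv le_rfl
  set M := sSup ((fun τ => ‖deriv g τ‖) '' Set.Icc 0 t)
  have hM : ∀ τ ∈ Set.Icc 0 t, ‖deriv g τ‖ ≤ M := fun τ hτ =>
    le_csSup (isCompact_Icc.image (continuous_norm.comp hdg)).bddAbove ⟨τ, hτ, rfl⟩
  have hφπ : φ < π := by linarith [hφ.2, pi_pos]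
  obtain ⟨hint_neg, hray_neg⟩ := integrableOn_Ici_and_norm_integral_ray_le hμ1 hCFanti hFcont
    hFbound hdg hc hφ ht hM (θ := -(π - φ)) (by rw [abs_neg, abs_of_pos (by linarith)])
  obtain ⟨hint_pos, hray_pos⟩ := integrableOn_Ici_and_norm_integral_ray_le hμ1 hCFanti hFcont
    hFbound hdg hc hφ ht hM (θ := π - φ) (abs_of_pos (by linarith))
  have hangle_neg : Complex.I * ((-(π - φ) : ℝ) : ℂ) = -Complex.I * ((π : ℝ) - φ) := by
    push_cast; ring
  have hangle_pos : Complex.I * ((π - φ : ℝ) : ℂ) = Complex.I * ((π : ℝ) - φ) := by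
    push_cast; ring
  have harc := norm_integral_arc_le hCFanti hFbound hc hφ.1 hφπ.le ht hM
  rw [hangle_neg] at hint_neg hray_neg
  rw [hangle_pos] at hint_pos hray_pos
  refine ⟨hint_neg, hint_pos, (norm_inv_two_pi_I_smul_le _ _ _).trans ?_⟩
  have hcosφ : 0 < Real.cos φ := Real.cos_pos_of_mem_Ioo ⟨by linarith [hφ.1], hφ.2⟩
  have hμ : 1 - μ ≠ 0 := by linarith
  refine (mul_le_mul_of_nonneg_left (add_le_add (add_le_add hray_neg harc) hray_pos)
    (by positivity)).trans_eq ?_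
  field_simp
  ring

theorem stmt11 {X Y : Type*} [NormedAddCommGroup X] [NormedSpace ℂ X] [CompleteSpace X]
    [NormedAddCommGroup Y] [NormedSpace ℂ Y] [CompleteSpace Y]
    (μ : ℝ) (hμ0 : 0 ≤ μ) (hμ1 : μ < 1)
    (CF : ℝ → ℝ) (hCFpos : ∀ x : ℝ, 0 < x → 0 < CF x)
    (hCFanti : ∀ x y : ℝ, 0 < x → x ≤ y → CF y ≤ CF x)
    (F : ℂ → X →L[ℂ] Y)
    (hFcont : ContinuousOn F {s : ℂ | ∀ x : ℝ, x ≤ 0 → s ≠ (x : ℂ)})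
    (hFbound : ∀ s : ℂ, (∀ x : ℝ, x ≤ 0 → s ≠ (x : ℂ)) →
      ‖F s‖ ≤ CF (csqrt s).re * ‖s‖ ^ μ)
    (g : ℝ → X) (hg : ContDiff ℝ 1 g) (hgcausal : ∀ τ : ℝ, τ ≤ 0 → g τ = 0)
    (c φ t : ℝ) (hc : 0 < c) (hφ : φ ∈ Set.Ioo 0 (π / 2)) (ht : 0 ≤ t) :
    IntegrableOn (fun ρ : ℝ =>
        ((ρ : ℂ))⁻¹ • F ((ρ : ℂ) * Complex.exp (-Complex.I * ((π : ℝ) - φ)))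
          (aInt g ((ρ : ℂ) * Complex.exp (-Complex.I * ((π : ℝ) - φ))) t))
      (Set.Ici c)
    ∧ IntegrableOn (fun ρ : ℝ =>
        ((ρ : ℂ))⁻¹ • F ((ρ : ℂ) * Complex.exp (Complex.I * ((π : ℝ) - φ)))
          (aInt g ((ρ : ℂ) * Complex.exp (Complex.I * ((π : ℝ) - φ))) t))
      (Set.Ici c)
    ∧ ‖(2 * (π : ℂ) * Complex.I)⁻¹ •
          (-(∫ ρ in Set.Ici c,
              ((ρ : ℂ))⁻¹ • F ((ρ : ℂ) * Complex.exp (-Complex.I * ((π : ℝ) - φ)))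
                (aInt g ((ρ : ℂ) * Complex.exp (-Complex.I * ((π : ℝ) - φ))) t))
            + Complex.I • (∫ θ in (-(π - φ))..(π - φ),
                F ((c : ℂ) * Complex.exp (Complex.I * θ))
                  (aInt g ((c : ℂ) * Complex.exp (Complex.I * θ)) t))
            + ∫ ρ in Set.Ici c,
                ((ρ : ℂ))⁻¹ • F ((ρ : ℂ) * Complex.exp (Complex.I * ((π : ℝ) - φ)))
                  (aInt g ((ρ : ℂ) * Complex.exp (Complex.I * ((π : ℝ) - φ))) t))‖
        ≤ (1 / π) * ((π - φ) * c ^ μ * Real.exp (c * t) * t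
              + c ^ (μ - 1) / ((1 - μ) * Real.cos φ))
            * CF (Real.sqrt c * Real.sin (φ / 2))
            * sSup ((fun τ => ‖deriv g τ‖) '' Set.Icc 0 t) :=
  stmt11_general μ hμ1 CF hCFanti F hFcont hFbound g hg c φ t hc hφ ht
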